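/- There is a diversity-seeking jump game on a star topology with n agents of k ≥ 2 types whose price of anarchy is at least (n−1)/(k−1). Concretely, on a star with n+1 nodes, with k−1 types of size 1 and one type ('red') of size n−k+1: the assignment placing a size-1-type agent at the center achieves social welfare n, while placing a red agent at the center is an equilibrium with social welfare (k−1)·n/(n−1). -/

import Mathlib

open Finset

variable {V τ : Type}

open Classical in
noncomputable def occNbrs [Fintype V] (G : SimpleGraph V) (C : V → Option τ) (v : V) :
    Finset V :=
  Finset.univ.filter (fun u => G.Adj v u ∧ (C u).isSome)

open Classical in
noncomputable def diffNbrs [Fintype V] (G : SimpleGraph V) (C : V → Option τ) (v : V)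
    (t : τ) : Finset V :=
  Finset.univ.filter (fun u => G.Adj v u ∧ ∃ s, C u = some s ∧ s ≠ t)

/-- Utility of the agent at node `v`: fraction of occupied neighbors of different type. -/
noncomputable def util [Fintype V] (G : SimpleGraph V) (C : V → Option τ) (v : V) : ℚ :=
  match C v with
  | none => 0
  | some t =>
      if (occNbrs G C v).card = 0 then 0
      else ((diffNbrs G C v t).card : ℚ) / ((occNbrs G C v).card : ℚ)

/-- The assignment after the agent at `u` jumps to node `w`. -/
def move [DecidableEq V] (C : V → Option τ) (u w : V) : V → Option τ :=
  fun x => if x = w then C u else if x = u then none else C x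

/-- An improving move: the agent at `u` jumps to the empty node `w`, strictly increasing
its utility. -/
def Improves [Fintype V] [DecidableEq V] (G : SimpleGraph V) (C : V → Option τ)
    (u w : V) : Prop :=
  (C u).isSome ∧ C w = none ∧ util G C u < util G (move C u w) w

/-- Pure Nash equilibrium: no agent can strictly improve by jumping to an empty node. -/
def IsEquil [Fintype V] [DecidableEq V] (G : SimpleGraph V) (C : V → Option τ) : Prop :=
  ∀ u w : V, (C u).isSome → C w = none → util G (move C u w) w ≤ util G C u

/-- Social welfare: sum of agents' utilities. -/
noncomputable def SW [Fintype V] (G : SimpleGraph V) (C : V → Option τ) : ℚ :=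
  ∑ v, util G C v

open Classical in
noncomputable def pw (C : V → Option τ) (m : ℚ) (u v : V) : ℚ :=
  if (C u).isNone ∨ (C v).isNone then m
  else if C u = C v then 1 else 0

open Classical in
/-- The potential function: sum over edges, weight 1 for same-type endpoints,
`m` if an endpoint is unoccupied, 0 for different-type endpoints. -/
noncomputable def potential [Fintype V] (G : SimpleGraph V) (C : V → Option τ)
    (m : ℚ) : ℚ :=
  (∑ p : V × V, if G.Adj p.1 p.2 then pw C m p.1 p.2 else 0) / 2

open Classical in
noncomputable def countType [Fintype V] (C : V → Option τ) (t : τ) : ℕ :=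
  (Finset.univ.filter (fun v => C v = some t)).card

open Classical in
noncomputable def emptyCount [Fintype V] (C : V → Option τ) : ℕ :=
  (Finset.univ.filter (fun v => C v = none)).card

/-- The star on `n+1` nodes with center `0`. -/
def starGraph (n : ℕ) : SimpleGraph (Fin (n + 1)) :=
  SimpleGraph.fromRel (fun u _ => u = 0)

/-!
On a star a leaf sees only the center, so its utility is `1` or `0` according as the center
holds another type, while the center's utility is `d / m`, where `m` counts the occupied leaves
and `d` those of a type different from the center's; hence the welfare is `d + d / m`, and
`d = m + 1 - (size of the center's type)`. When the center is occupied every configuration is an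
equilibrium: a leaf jumping to another leaf keeps its utility, and the center agent jumping to a
leaf empties the center.

Leave node `n` empty and give node `v < n` the type `min v (k - 1)`, so that `k - 1` is the red
type. The center then holds a singleton type and `d = m = n - 1`, giving welfare `n`; swapping
the center with node `k - 1` puts a red agent there and gives `d = k - 1`, hence welfare
`(k - 1) + (k - 1) / (n - 1)`.
-/

lemma util_of_eq_some [Fintype V] (G : SimpleGraph V) {C : V → Option τ} {v : V} {t : τ}
    (h : C v = some t) :
    util G C v = if (occNbrs G C v).card = 0 then 0
      else ((diffNbrs G C v t).card : ℚ) / ((occNbrs G C v).card : ℚ) := by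
  rw [util, h]

lemma util_of_eq_none [Fintype V] (G : SimpleGraph V) {C : V → Option τ} {v : V}
    (h : C v = none) : util G C v = 0 := by
  rw [util, h]

lemma util_nonneg [Fintype V] (G : SimpleGraph V) (C : V → Option τ) (v : V) :
    0 ≤ util G C v := by
  cases h : C v with
  | none => rw [util_of_eq_none G h]
  | some t => rw [util_of_eq_some G h]; split_ifs <;> positivity

section Star

variable {n : ℕ} {C : Fin (n + 1) → Option τ}

lemma starGraph_adj_zero_left {v : Fin (n + 1)} : (starGraph n).Adj 0 v ↔ v ≠ 0 := by
  simp [starGraph, eq_comm]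

lemma starGraph_adj_of_ne_zero {u v : Fin (n + 1)} (hu : u ≠ 0) :
    (starGraph n).Adj u v ↔ v = 0 := by
  simp only [starGraph, SimpleGraph.fromRel_adj, hu, false_or]
  exact and_iff_right_of_imp fun h => h ▸ hu

open Classical in
lemma util_starGraph_of_ne_zero {v : Fin (n + 1)} {t : τ} (hv : v ≠ 0) (ht : C v = some t) :
    util (starGraph n) C v = if ∃ s, C 0 = some s ∧ s ≠ t then 1 else 0 := by
  have hocc : occNbrs (starGraph n) C v = if (C 0).isSome then {0} else ∅ := by
    split_ifs with h <;> ext u <;> by_cases hu : u = 0 <;>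
      simp [occNbrs, starGraph_adj_of_ne_zero hv, hu, h]
  have hdiff :
      diffNbrs (starGraph n) C v t = if ∃ s, C 0 = some s ∧ s ≠ t then {0} else ∅ := by
    split_ifs with h <;> ext u <;> by_cases hu : u = 0 <;>
      simp_all [diffNbrs, starGraph_adj_of_ne_zero hv]
  rw [util_of_eq_some _ ht, hocc, hdiff]
  split_ifs <;> simp_all

-- The case `m = 0` of `util` is covered by `x / 0 = 0` in `ℚ`.
lemma util_starGraph_zero {c : τ} (hc : C 0 = some c) :
    util (starGraph n) C 0 =
      ((diffNbrs (starGraph n) C 0 c).card : ℚ) / (occNbrs (starGraph n) C 0).card := by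
  rw [util_of_eq_some _ hc]
  split_ifs with h
  · simp [h]
  · rfl

theorem isEquil_starGraph (hC : (C 0).isSome) : IsEquil (starGraph n) C := by
  intro u w hu hw
  obtain ⟨t, ht⟩ := Option.isSome_iff_exists.mp hu
  have hw0 : w ≠ 0 := by rintro rfl; simp [hw] at hC
  have hmoved : move C u w w = some t := by simp [move, ht]
  rw [util_starGraph_of_ne_zero hw0 hmoved]
  by_cases hu0 : u = 0
  · have : move C u w 0 = none := by simp [move, hu0, hw0.symm]
    simp [this, util_nonneg]
  · have : move C u w 0 = C 0 := by simp [move, hw0.symm, Ne.symm hu0]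
    rw [this, util_starGraph_of_ne_zero hu0 ht]

theorem SW_starGraph {c : τ} (hc : C 0 = some c) :
    SW (starGraph n) C = (diffNbrs (starGraph n) C 0 c).card
      + ((diffNbrs (starGraph n) C 0 c).card : ℚ) / (occNbrs (starGraph n) C 0).card := by
  classical
  have hleaf : ∀ v ∈ univ.erase 0,
      util (starGraph n) C v = if v ∈ diffNbrs (starGraph n) C 0 c then 1 else 0 := by
    intro v hv
    have hv0 : v ≠ 0 := ne_of_mem_erase hv
    cases ht : C v with
    | none => simp [util_of_eq_none _ ht, diffNbrs, ht]
    | some t =>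
      rw [util_starGraph_of_ne_zero hv0 ht]
      simp [diffNbrs, starGraph_adj_zero_left, hv0, hc, ht, eq_comm]
  have hsub : diffNbrs (starGraph n) C 0 c ⊆ univ.erase 0 := fun v hv =>
    mem_erase.mpr ⟨starGraph_adj_zero_left.mp (mem_filter.mp hv).2.1, mem_univ v⟩
  rw [SW, ← add_sum_erase _ _ (mem_univ 0), sum_congr rfl hleaf, sum_boole,
    filter_mem_eq_inter, inter_eq_right.mpr hsub, util_starGraph_zero hc, add_comm]

lemma card_diffNbrs_starGraph_zero_add_countType {c : τ} (hc : C 0 = some c) :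
    (diffNbrs (starGraph n) C 0 c).card + countType C c
      = (occNbrs (starGraph n) C 0).card + 1 := by
  classical
  have hdisj : Disjoint (diffNbrs (starGraph n) C 0 c) (univ.filter fun v => C v = some c) := by
    simp +contextual [disjoint_left, diffNbrs]
  have hunion : diffNbrs (starGraph n) C 0 c ∪ (univ.filter fun v => C v = some c)
      = insert 0 (occNbrs (starGraph n) C 0) := by
    ext v
    by_cases hv : v = 0
    · simp [hv, hc]
    · cases hv' : C v with
      | none => simp [diffNbrs, occNbrs, hv, hv']
      | some t =>
        by_cases h : t = c <;> simp [diffNbrs, occNbrs, starGraph_adj_zero_left, hv, hv', h]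
  have h0 : (0 : Fin (n + 1)) ∉ occNbrs (starGraph n) C 0 := by simp [occNbrs]
  rw [countType, ← card_union_of_disjoint hdisj, hunion, card_insert_of_notMem h0]

lemma card_occNbrs_starGraph_zero (hn : n ≠ 0) (hC : ∀ v, C v = none ↔ v = Fin.last n) :
    (occNbrs (starGraph n) C 0).card = n - 1 := by
  classical
  have hlast : Fin.last n ≠ 0 := by simp [Fin.ext_iff, hn]
  have hocc : occNbrs (starGraph n) C 0 = (univ.erase 0).erase (Fin.last n) := by
    ext v
    simp [occNbrs, starGraph_adj_zero_left, Option.isSome_iff_ne_none, hC, and_comm]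
  rw [hocc, card_erase_of_mem (mem_erase.mpr ⟨hlast, mem_univ _⟩),
    card_erase_of_mem (mem_univ _), card_univ, Fintype.card_fin]
  simp

end Star

lemma countType_comp_perm [Fintype V] (C : V → Option τ) (σ : Equiv.Perm V) (t : τ) :
    countType (C ∘ σ) t = countType C t := by
  unfold countType
  exact Finset.card_equiv σ (by simp)

def optimalAssignment (n k : ℕ) (hk : 0 < k) : Fin (n + 1) → Option (Fin k) :=
  fun v => if (v : ℕ) < n then some ⟨min v (k - 1), by omega⟩ else none

def redCenterAssignment (n k : ℕ) (hk : 0 < k) (hkn : k ≤ n) : Fin (n + 1) → Option (Fin k) :=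
  optimalAssignment n k hk ∘ Equiv.swap 0 ⟨k - 1, by omega⟩

section Assignments

variable {n k : ℕ}

lemma optimalAssignment_eq_none_iff (hk : 0 < k) {v : Fin (n + 1)} :
    optimalAssignment n k hk v = none ↔ v = Fin.last n := by
  simp [optimalAssignment, Fin.ext_iff, Fin.val_last]
  omega

lemma optimalAssignment_zero (hk : 0 < k) (hn : n ≠ 0) :
    optimalAssignment n k hk 0 = some ⟨0, hk⟩ := by
  simp [optimalAssignment, Nat.pos_of_ne_zero hn]

lemma countType_optimalAssignment (hk : 0 < k) (hkn : k ≤ n) (t : Fin k) :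
    countType (optimalAssignment n k hk) t = if t.val = k - 1 then n - k + 1 else 1 := by
  split_ifs with ht
  · have : countType (optimalAssignment n k hk) t = #(Ico ⟨k - 1, by omega⟩ (Fin.last n)) := by
      unfold countType
      congr 1
      ext v
      simp [optimalAssignment, Fin.ext_iff, Fin.le_def, Fin.lt_def]
      omega
    rw [this, Fin.card_Ico, Fin.val_last, Fin.val_mk]
    omega
  · have : countType (optimalAssignment n k hk) t = #{(⟨t, by omega⟩ : Fin (n + 1))} := by
      unfold countType
      congr 1
      ext v
      simp [optimalAssignment, Fin.ext_iff]
      omega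
    rw [this, card_singleton]

lemma redCenterAssignment_zero (hk : 0 < k) (hkn : k ≤ n) :
    redCenterAssignment n k hk hkn 0 = some ⟨k - 1, by omega⟩ := by
  simp [redCenterAssignment, optimalAssignment]
  omega

lemma redCenterAssignment_eq_none_iff (hk : 0 < k) (hkn : k ≤ n) {v : Fin (n + 1)} :
    redCenterAssignment n k hk hkn v = none ↔ v = Fin.last n := by
  rw [redCenterAssignment, Function.comp_apply, optimalAssignment_eq_none_iff,
    Equiv.swap_apply_eq_iff, Equiv.swap_apply_of_ne_of_ne] <;> simp [Fin.ext_iff] <;> omega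

lemma countType_redCenterAssignment (hk : 0 < k) (hkn : k ≤ n) (t : Fin k) :
    countType (redCenterAssignment n k hk hkn) t = if t.val = k - 1 then n - k + 1 else 1 :=
  (countType_comp_perm _ _ t).trans (countType_optimalAssignment hk hkn t)

lemma SW_optimalAssignment (hk : 2 ≤ k) (hkn : k ≤ n) :
    SW (starGraph n) (optimalAssignment n k (by omega)) = n := by
  have hc := optimalAssignment_zero (n := n) (by omega : 0 < k) (by omega)
  have hm : (occNbrs (starGraph n) (optimalAssignment n k (by omega)) 0).card = n - 1 :=
    card_occNbrs_starGraph_zero (by omega) fun _ => optimalAssignment_eq_none_iff _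
  have hd := card_diffNbrs_starGraph_zero_add_countType hc
  rw [countType_optimalAssignment _ hkn, if_neg (by simp; omega)] at hd
  have hn : ((n - 1 : ℕ) : ℚ) ≠ 0 := by norm_cast; omega
  rw [SW_starGraph hc, show (diffNbrs (starGraph n) _ 0 _).card = n - 1 by omega, hm,
    div_self hn, Nat.cast_pred (by omega)]
  ring

lemma SW_redCenterAssignment (hk : 2 ≤ k) (hkn : k ≤ n) :
    SW (starGraph n) (redCenterAssignment n k (by omega) hkn) = ((k : ℚ) - 1) * n / (n - 1) := by
  have hc := redCenterAssignment_zero (by omega : 0 < k) hkn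
  have hm : (occNbrs (starGraph n) (redCenterAssignment n k (by omega) hkn) 0).card = n - 1 :=
    card_occNbrs_starGraph_zero (by omega) fun _ => redCenterAssignment_eq_none_iff _ hkn
  have hd := card_diffNbrs_starGraph_zero_add_countType hc
  rw [countType_redCenterAssignment _ hkn, if_pos rfl] at hd
  have hn : (n : ℚ) - 1 ≠ 0 := by
    rw [sub_ne_zero]; norm_cast; omega
  rw [SW_starGraph hc, show (diffNbrs (starGraph n) _ 0 _).card = k - 1 by omega, hm,
    Nat.cast_pred (by omega), Nat.cast_pred (by omega)]
  field_simp
  ring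

end Assignments

/-- On a star with n+1 nodes, with k−1 types of size 1 and one 'red' type
(type k−1) of size n−k+1: placing a size-1-type agent at the center gives social welfare
n, while placing a red agent at the center is an equilibrium with social welfare
(k−1)·n/(n−1); hence the price of anarchy is at least (n−1)/(k−1). -/
theorem stmt9 (n k : ℕ) (hk : 2 ≤ k) (hkn : k ≤ n) :
    ∃ C Copt : Fin (n + 1) → Option (Fin k),
      (∀ t : Fin k, countType C t = if t.val = k - 1 then n - k + 1 else 1) ∧
      (∀ t : Fin k, countType Copt t = if t.val = k - 1 then n - k + 1 else 1) ∧
      (∃ t : Fin k, t.val < k - 1 ∧ Copt 0 = some t) ∧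
      SW (starGraph n) Copt = (n : ℚ) ∧
      C 0 = some ⟨k - 1, by omega⟩ ∧
      IsEquil (starGraph n) C ∧
      SW (starGraph n) C = ((k : ℚ) - 1) * (n : ℚ) / ((n : ℚ) - 1) := by
  have hk0 : 0 < k := by omega
  refine ⟨redCenterAssignment n k hk0 hkn, optimalAssignment n k hk0,
    countType_redCenterAssignment hk0 hkn, countType_optimalAssignment hk0 hkn,
    ⟨⟨0, hk0⟩, show 0 < k - 1 by omega, optimalAssignment_zero hk0 (by omega)⟩,
    SW_optimalAssignment hk hkn, redCenterAssignment_zero hk0 hkn,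
    isEquil_starGraph ?_, SW_redCenterAssignment hk hkn⟩
  simp [redCenterAssignment_zero hk0 hkn]
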